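/- arXiv:1107.0010 — 5 statements merged into one kernel-verified Lean document; each statement's English description precedes it below -/
import Mathlib

section
/- Let H be a complex Hilbert space, let A be a bounded self-adjoint operator on H, and let f : ℝ → ℂ be a Schwartz function. Then the operator f(A) obtained by applying the continuous functional calculus of the self-adjoint operator A to the function f equals the Bochner integral ∫_ℝ (𝓕f)(ξ) · exp((2πiξ)·A) dξ, where exp denotes the exponential in the Banach algebra of bounded operators on H. -/
open MeasureTheory

/-!
On the spectrum of a self-adjoint element, which is real, Fourier inversion writes `f` as the
integral of the bounded continuous functions `z ↦ 𝓕f(ξ) exp(2πiξz)`, dominated by `‖𝓕f(ξ)‖`.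
The continuous functional calculus commutes with such integrals and sends `exp(2πiξz)` to
`exp((2πiξ) • a)`.
-/

open Complex FourierTransform Real

theorem SchwartzMap.integral_fourier_mul_exp (f : SchwartzMap ℝ ℂ) (x : ℝ) :
    ∫ ξ : ℝ, 𝓕 (⇑f) ξ * exp (2 * π * I * ξ * x) = f x := by
  have h := congrFun (f.continuous.fourierInv_fourier_eq f.integrable
    (by simpa only [SchwartzMap.fourier_coe] using (𝓕 f).integrable)) x
  rw [Real.fourierInv_eq'] at h
  rw [← h]
  refine integral_congr_ae (.of_forall fun ξ => ?_)
  simp only [smul_eq_mul, RCLike.inner_apply, conj_trivial]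
  rw [mul_comm]
  push_cast
  ring_nf

lemma norm_exp_two_pi_I_mul_ofReal (ξ x : ℝ) : ‖exp (2 * π * I * ξ * x)‖ = 1 := by
  rw [← norm_exp_ofReal_mul_I (2 * π * ξ * x)]
  push_cast
  ring_nf

section CStarAlgebra

variable {A : Type*} [CStarAlgebra A]

lemma IsStarNormal.exp_smul_eq_cfc {a : A} (ha : IsStarNormal a) (c : ℂ) :
    NormedSpace.exp (c • a) = cfc (fun z => exp (c * z)) a := by
  rw [← CFC.complex_exp_eq_normedSpace_exp, ← cfc_comp_const_mul c exp a]

theorem IsSelfAdjoint.cfc_eq_integral_fourier_smul_exp {a : A} (ha : IsSelfAdjoint a)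
    (f : SchwartzMap ℝ ℂ) :
    cfc (fun z : ℂ => f z.re) a =
      ∫ ξ : ℝ, 𝓕 (⇑f) ξ • NormedSpace.exp ((2 * π * I * ξ : ℂ) • a) := by
  have real_of_mem {z : ℂ} (hz : z ∈ spectrum ℂ a) : ∃ x : ℝ, z = x :=
    ⟨z.re, ha.mem_spectrum_eq_re hz⟩
  have hFf : Continuous (𝓕 (⇑f)) := by
    simpa only [SchwartzMap.fourier_coe] using (𝓕 f).continuous
  calc cfc (fun z : ℂ => f z.re) a
      = cfc (fun z : ℂ => ∫ ξ : ℝ, 𝓕 (⇑f) ξ * Complex.exp (2 * π * I * ξ * z)) a := by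
        refine cfc_congr fun z hz => ?_
        obtain ⟨x, rfl⟩ := real_of_mem hz
        rw [ofReal_re, SchwartzMap.integral_fourier_mul_exp]
    _ = ∫ ξ : ℝ, cfc (fun z : ℂ => 𝓕 (⇑f) ξ * Complex.exp (2 * π * I * ξ * z)) a := by
        refine cfc_integral _ (fun ξ => ‖𝓕 (⇑f) ξ‖) a (by fun_prop)
          (.of_forall fun ξ z hz => ?_) ?_
        · obtain ⟨x, rfl⟩ := real_of_mem hz
          rw [norm_mul, norm_exp_two_pi_I_mul_ofReal, mul_one]
        · simpa only [SchwartzMap.fourier_coe] using (𝓕 f).integrable.norm.hasFiniteIntegral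
    _ = ∫ ξ : ℝ, 𝓕 (⇑f) ξ • NormedSpace.exp ((2 * π * I * ξ : ℂ) • a) := by
        congr with ξ
        rw [ha.isStarNormal.exp_smul_eq_cfc, cfc_const_mul _ _ a]

end CStarAlgebra

/-- For a bounded self-adjoint operator `A` on a complex Hilbert space and a
Schwartz function `f : ℝ → ℂ`, the operator `f(A)` given by the continuous functional calculus
(applied to the function `z ↦ f (Re z)`, which agrees with `f` on the real spectrum of `A`)
equals the Bochner integral `∫ ξ, (𝓕 f)(ξ) • exp((2πiξ) • A) dξ`. -/
theorem stmt3 {H : Type*} [NormedAddCommGroup H] [InnerProductSpace ℂ H] [CompleteSpace H]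
    (A : H →L[ℂ] H) (hA : IsSelfAdjoint A) (f : SchwartzMap ℝ ℂ) :
    cfc (fun z : ℂ => f z.re) A =
      ∫ ξ : ℝ, FourierTransform.fourier (⇑f : ℝ → ℂ) ξ •
        NormedSpace.exp ((2 * (Real.pi : ℂ) * Complex.I * (ξ : ℂ)) • A) :=
  hA.cfc_eq_integral_fourier_smul_exp f
end

section
/- Let H be a complex Hilbert space and let A be a bounded self-adjoint operator on H; for s ∈ ℝ write cos(sA) := (exp(isA) + exp(-isA))/2, where exp denotes the exponential in the Banach algebra of bounded operators on H. If u : ℝ → H is twice differentiable with u''(s) = −A²(u(s)) for all s ∈ ℝ, u(0) = u₀, and u'(0) = 0, then u(s) = cos(sA) u₀ for all s ∈ ℝ. -/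
/-!
For `c = ±i` we have `c² = -1`, so the wave operator factors as
`d²/ds² + A² = (d/ds - cA)(d/ds + cA)`: the function `w = u' + cAu` solves `w' = cAw`, hence
`w s = exp (scA) (w 0) = exp (scA) (cAu₀)`. Averaging over `c = ±i` expresses `u'` as the
derivative of `s ↦ cos (sA) u₀`, and both functions take the value `u₀` at `0`.
-/

/-- The operator cosine family `cos (s A) = (exp (i s A) + exp (-i s A)) / 2` of a bounded
operator `A` on a complex Hilbert space. -/
noncomputable def opCos {H : Type*} [NormedAddCommGroup H] [InnerProductSpace ℂ H]
    [CompleteSpace H] (A : H →L[ℂ] H) (s : ℝ) : H →L[ℂ] H :=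
  (2 : ℂ)⁻¹ • (NormedSpace.exp (((s : ℂ) * Complex.I) • A) +
    NormedSpace.exp ((-(s : ℂ) * Complex.I) • A))

open NormedSpace

theorem eq_of_hasDerivAt_eq {E : Type*} [NormedAddCommGroup E] [NormedSpace ℝ E]
    {f g f' : ℝ → E} (hf : ∀ x, HasDerivAt f (f' x) x) (hg : ∀ x, HasDerivAt g (f' x) x)
    {a : ℝ} (ha : f a = g a) : f = g :=
  eq_of_fderiv_eq (fun x ↦ (hf x).differentiableAt) (fun x ↦ (hg x).differentiableAt)
    (fun x ↦ by rw [(hf x).hasFDerivAt.fderiv, (hg x).hasFDerivAt.fderiv]) a ha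

section RestrictScalars

variable {𝕜 E F : Type*} [NontriviallyNormedField 𝕜] [NormedAlgebra ℝ 𝕜]
  [NormedAddCommGroup E] [NormedSpace 𝕜 E] [NormedSpace ℝ E] [IsScalarTower ℝ 𝕜 E]
  [NormedAddCommGroup F] [NormedSpace 𝕜 F] [NormedSpace ℝ F] [IsScalarTower ℝ 𝕜 F]

theorem HasDerivAt.clm_apply_of_restrictScalars {c : ℝ → E →L[𝕜] F} {c' : E →L[𝕜] F}
    {v : ℝ → E} {v' : E} {x : ℝ} (hc : HasDerivAt c c' x) (hv : HasDerivAt v v' x) :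
    HasDerivAt (fun y ↦ c y (v y)) (c' (v x) + c x v') x := by
  have hc' : HasDerivAt (fun y ↦ (c y).restrictScalars ℝ) (c'.restrictScalars ℝ) x :=
    (ContinuousLinearMap.restrictScalarsL 𝕜 E F ℝ ℝ).hasFDerivAt.comp_hasDerivAt x hc
  exact hc'.clm_apply hv

end RestrictScalars

section ComplexBanach

variable {E : Type*} [NormedAddCommGroup E] [NormedSpace ℂ E]

theorem hasDerivAt_add_smul_apply_of_mul_self_eq_neg_one {A : E →L[ℂ] E} {u u' : ℝ → E}
    (hu : ∀ s, HasDerivAt u (u' s) s) (hu' : ∀ s, HasDerivAt u' (-(A (A (u s)))) s)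
    {c : ℂ} (hc : c * c = -1) (s : ℝ) :
    HasDerivAt (fun s ↦ u' s + c • A (u s)) ((c • A) (u' s + c • A (u s))) s := by
  refine ((hu' s).add (((c • A).restrictScalars ℝ).hasFDerivAt.comp_hasDerivAt s
    (hu s))).congr_deriv ?_
  simp [smul_smul, hc, add_comm]

variable [CompleteSpace E]

theorem hasDerivAt_exp_smul_apply (B : E →L[ℂ] E) (x : E) (t : ℝ) :
    HasDerivAt (fun s : ℝ ↦ exp (s • B) x) (exp (t • B) (B x)) t := by
  simpa using (hasDerivAt_exp_smul_const B t).clm_apply_of_restrictScalars (hasDerivAt_const t x)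

theorem exp_smul_mul_exp_smul_neg (B : E →L[ℂ] E) (t : ℝ) : exp (t • B) * exp (t • -B) = 1 := by
  let +nondep : NormedAlgebra ℚ (E →L[ℂ] E) := .restrictScalars ℚ ℂ _
  rw [smul_neg, ← exp_add_of_commute (Commute.refl _).neg_right, add_neg_cancel, exp_zero]

theorem eq_exp_smul_apply_of_hasDerivAt {B : E →L[ℂ] E} {w : ℝ → E}
    (hw : ∀ t, HasDerivAt w (B (w t)) t) (t : ℝ) : w t = exp (t • B) (w 0) := by
  have hconst : (fun s : ℝ ↦ exp (s • -B) (w s)) = fun _ ↦ w 0 := by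
    refine eq_of_hasDerivAt_eq (f' := fun _ ↦ 0) (fun s ↦ ?_) (fun _ ↦ hasDerivAt_const _ _)
      (a := 0) (by simp)
    simpa using (hasDerivAt_exp_smul_const (-B) s).clm_apply_of_restrictScalars (hw s)
  rw [← congrFun hconst t, ← mul_apply_eq_comp, exp_smul_mul_exp_smul_neg, one_apply_eq_self]

end ComplexBanach

section opCos

variable {H : Type*} [NormedAddCommGroup H] [InnerProductSpace ℂ H] [CompleteSpace H]

theorem opCos_eq_exp_smul (A : H →L[ℂ] H) (s : ℝ) :
    opCos A s = (2 : ℂ)⁻¹ • (exp (s • (Complex.I • A)) + exp (s • ((-Complex.I) • A))) := by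
  simp only [opCos, ← Complex.coe_smul, smul_smul, neg_mul, mul_neg]

theorem opCos_zero (A : H →L[ℂ] H) : opCos A 0 = 1 := by
  rw [opCos_eq_exp_smul]
  simp only [zero_smul, exp_zero, ← two_smul ℂ, smul_smul]
  norm_num

theorem hasDerivAt_opCos_apply (A : H →L[ℂ] H) (x : H) (s : ℝ) :
    HasDerivAt (fun s ↦ opCos A s x) ((2 : ℂ)⁻¹ •
      (exp (s • (Complex.I • A)) ((Complex.I • A) x) +
        exp (s • ((-Complex.I) • A)) (((-Complex.I) • A) x))) s := by
  simp only [opCos_eq_exp_smul, smul_apply, add_apply]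
  exact ((hasDerivAt_exp_smul_apply _ x s).add (hasDerivAt_exp_smul_apply _ x s)).const_smul _

end opCos

theorem stmt4_general {H : Type*} [NormedAddCommGroup H] [InnerProductSpace ℂ H] [CompleteSpace H]
    (A : H →L[ℂ] H) (u u' : ℝ → H) (u₀ : H)
    (hu : ∀ s : ℝ, HasDerivAt u (u' s) s)
    (hu' : ∀ s : ℝ, HasDerivAt u' (-(A (A (u s)))) s)
    (hu0 : u 0 = u₀) (hu'0 : u' 0 = 0) :
    ∀ s : ℝ, u s = opCos A s u₀ := by
  have hfactor {c : ℂ} (hc : c * c = -1) (s : ℝ) :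
      u' s + c • A (u s) = exp (s • (c • A)) ((c • A) u₀) := by
    simpa [hu0, hu'0] using eq_exp_smul_apply_of_hasDerivAt
      (hasDerivAt_add_smul_apply_of_mul_self_eq_neg_one hu hu' hc) s
  have hu'_eq (s : ℝ) : u' s = (2 : ℂ)⁻¹ • ((u' s + Complex.I • A (u s)) +
      (u' s + (-Complex.I) • A (u s))) := by
    rw [neg_smul, ← sub_eq_add_neg, add_add_sub_cancel, ← two_smul ℂ, smul_smul]
    norm_num
  have hcos (s : ℝ) : HasDerivAt (fun s ↦ opCos A s u₀) (u' s) s := by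
    rw [hu'_eq, hfactor Complex.I_mul_I, hfactor (by simp)]
    exact hasDerivAt_opCos_apply A u₀ s
  refine congrFun (eq_of_hasDerivAt_eq hu hcos (a := 0) ?_)
  rw [hu0, opCos_zero, one_apply_eq_self]

/-- If `A` is a bounded self-adjoint operator on a complex Hilbert space and
`u : ℝ → H` is twice differentiable with `u'' = -A² u`, `u 0 = u₀`, `u' 0 = 0`, then
`u s = cos (s A) u₀` for all `s`. -/
theorem stmt4 {H : Type*} [NormedAddCommGroup H] [InnerProductSpace ℂ H] [CompleteSpace H]
    (A : H →L[ℂ] H) (hA : IsSelfAdjoint A) (u u' : ℝ → H) (u₀ : H)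
    (hu : ∀ s : ℝ, HasDerivAt u (u' s) s)
    (hu' : ∀ s : ℝ, HasDerivAt u' (-(A (A (u s)))) s)
    (hu0 : u 0 = u₀) (hu'0 : u' 0 = 0) :
    ∀ s : ℝ, u s = opCos A s u₀ :=
  stmt4_general A u u' u₀ hu hu' hu0 hu'0
end

section
/- Let H be a complex Hilbert space and let A and B be bounded self-adjoint operators on H; for s ∈ ℝ write cos(sA) := (exp(isA) + exp(-isA))/2 and cos(sB) := (exp(isB) + exp(-isB))/2, where exp denotes the exponential in the Banach algebra of bounded operators on H. Let ψ : ℝ → ℂ be a Schwartz function, let c > 0, let φ : ℝ → ℂ be a bounded continuous function with support contained in [−2c, 2c], and for ε ∈ (0,1] define T_ε^A := ∫_ℝ φ(s) ε^{-1} ψ(s/ε) cos(sA) ds and T_ε^B := ∫_ℝ φ(s) ε^{-1} ψ(s/ε) cos(sB) ds (Bochner integrals). Then for all ε ∈ (0,1], ‖T_ε^A − T_ε^B‖ ≤ (1/2) · ‖A² − B²‖ · (sup_{s∈ℝ} |φ(s)|) · (∫_ℝ σ² |ψ(σ)| dσ) · ε². -/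
open MeasureTheory Filter Topology

/-- The regularization operator `T_ε^A = ∫ φ(s) ε⁻¹ ψ(s/ε) cos (s A) ds`. -/
noncomputable def regOp {H : Type*} [NormedAddCommGroup H] [InnerProductSpace ℂ H]
    [CompleteSpace H] (A : H →L[ℂ] H) (φ : ℝ → ℂ) (ψ : ℝ → ℂ) (ε : ℝ) : H →L[ℂ] H :=
  ∫ s : ℝ, (φ s * (ε : ℂ)⁻¹ * ψ (s / ε)) • opCos A s

/-!
With `M = iA`, `opCos A s = cosh (s M)` and `M² = -A²`. Duhamel's formula gives
`cosh (s M) - cosh (s N) = ∫₀ˢ (sinh ((s - r) N) / N) (M² - N²) cosh (r M) dr`.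
When `exp (t M)` and `exp (t N)` are contractions for all real `t` (as for `M = iA`, `A`
self-adjoint), so is `cosh (r M)`, and `‖sinh (t N) / N‖ ≤ |t|`; hence
`‖cos (s A) - cos (s B)‖ ≤ s² ‖A² - B²‖ / 2`. Integrating this against the weight
`φ(s) ε⁻¹ ψ(s/ε)` and substituting `s = εσ` produces the factor `ε² ∫ σ² |ψ(σ)| dσ`.
-/

open NormedSpace

namespace CoshFamily

variable {𝔸 : Type*} [NormedRing 𝔸] [NormedAlgebra ℝ 𝔸]

noncomputable def expCosh (M : 𝔸) (s : ℝ) : 𝔸 :=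
  (2 : ℝ)⁻¹ • (exp (s • M) + exp (s • -M))

noncomputable def expSinh (M : 𝔸) (s : ℝ) : 𝔸 :=
  (2 : ℝ)⁻¹ • (exp (s • M) - exp (s • -M))

/-- `sinh (s M) / M`, which makes sense without inverting `M`. -/
noncomputable def integralCosh (M : 𝔸) (s : ℝ) : 𝔸 :=
  ∫ u in (0 : ℝ)..s, expCosh M u

@[simp]
theorem expCosh_zero (M : 𝔸) : expCosh M 0 = 1 := by
  simp only [expCosh, zero_smul, exp_zero, ← two_smul ℝ (1 : 𝔸), smul_smul]
  norm_num

@[simp]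
theorem expSinh_zero (M : 𝔸) : expSinh M 0 = 0 := by
  simp [expSinh]

@[simp]
theorem integralCosh_zero (M : 𝔸) : integralCosh M 0 = 0 := by
  simp [integralCosh]

theorem expCosh_neg (M : 𝔸) (s : ℝ) : expCosh M (-s) = expCosh M s := by
  simp only [expCosh, neg_smul, smul_neg, neg_neg, add_comm]

theorem commute_expCosh_mul_self (M : 𝔸) (s : ℝ) : Commute (expCosh M s) (M * M) := by
  have hM : Commute (exp (s • M)) M := ((Commute.refl M).smul_left s).exp_left
  have hM' : Commute (exp (s • -M)) M := ((Commute.refl M).neg_left.smul_left s).exp_left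
  exact ((hM.mul_right hM).add_left (hM'.mul_right hM')).smul_left _

theorem norm_expCosh_le_one {M : 𝔸} (hM : ∀ t : ℝ, ‖exp (t • M)‖ ≤ 1) (s : ℝ) :
    ‖expCosh M s‖ ≤ 1 :=
  calc ‖expCosh M s‖ ≤ 2⁻¹ * (‖exp (s • M)‖ + ‖exp ((-s) • M)‖) := by
        rw [expCosh, smul_neg, ← neg_smul, norm_smul, Real.norm_of_nonneg (by norm_num)]
        gcongr
        exact norm_add_le _ _
    _ ≤ 2⁻¹ * (1 + 1) := by gcongr <;> apply hM
    _ = 1 := by norm_num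

theorem norm_integralCosh_le {M : 𝔸} (hM : ∀ t : ℝ, ‖exp (t • M)‖ ≤ 1) (s : ℝ) :
    ‖integralCosh M s‖ ≤ |s| := by
  simpa [integralCosh] using
    intervalIntegral.norm_integral_le_of_norm_le_const (a := 0) (b := s)
      fun u _ => norm_expCosh_le_one hM u

variable [CompleteSpace 𝔸]

theorem hasDerivAt_expCosh (M : 𝔸) (s : ℝ) : HasDerivAt (expCosh M) (M * expSinh M s) s := by
  refine (((hasDerivAt_exp_smul_const' M s).add
    (hasDerivAt_exp_smul_const' (-M) s)).const_smul (2 : ℝ)⁻¹).congr_deriv ?_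
  simp only [expSinh, smul_add, smul_sub, mul_smul_comm, mul_sub, neg_mul, smul_neg]
  abel

theorem hasDerivAt_expSinh (M : 𝔸) (s : ℝ) : HasDerivAt (expSinh M) (M * expCosh M s) s := by
  refine (((hasDerivAt_exp_smul_const' M s).sub
    (hasDerivAt_exp_smul_const' (-M) s)).const_smul (2 : ℝ)⁻¹).congr_deriv ?_
  simp only [expCosh, smul_add, mul_smul_comm, mul_add, neg_mul, sub_neg_eq_add]

theorem continuous_expCosh (M : 𝔸) : Continuous (expCosh M) :=
  continuous_iff_continuousAt.2 fun s => (hasDerivAt_expCosh M s).continuousAt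

theorem hasDerivAt_integralCosh (M : 𝔸) (s : ℝ) :
    HasDerivAt (integralCosh M) (expCosh M s) s :=
  intervalIntegral.integral_hasDerivAt_right ((continuous_expCosh M).intervalIntegrable _ _)
    ((continuous_expCosh M).stronglyMeasurableAtFilter _ _) (continuous_expCosh M).continuousAt

theorem continuous_integralCosh (M : 𝔸) : Continuous (integralCosh M) :=
  continuous_iff_continuousAt.2 fun s => (hasDerivAt_integralCosh M s).continuousAt

/-- Both sides vanish at `0` and have derivative `expCosh M s * M²`. -/
theorem mul_expSinh (M : 𝔸) (s : ℝ) : M * expSinh M s = integralCosh M s * (M * M) := by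
  have hderiv : ∀ r, HasDerivAt (fun r => M * expSinh M r - integralCosh M r * (M * M)) 0 r := by
    intro r
    refine (((hasDerivAt_expSinh M r).const_mul M).sub
      ((hasDerivAt_integralCosh M r).mul_const (M * M))).congr_deriv ?_
    rw [← mul_assoc, ← (commute_expCosh_mul_self M r).eq, sub_self]
  have hconst := is_const_of_deriv_eq_zero (fun r => (hderiv r).differentiableAt)
    (fun r => (hderiv r).deriv) s 0
  simpa [sub_eq_zero] using hconst

/-- Duhamel's formula: the integrand is the derivative of
`r ↦ integralCosh N (s - r) * (M * expSinh M r) + expCosh N (s - r) * expCosh M r`. -/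
theorem expCosh_sub_expCosh (M N : 𝔸) (s : ℝ) :
    expCosh M s - expCosh N s =
      ∫ r in (0 : ℝ)..s, integralCosh N (s - r) * ((M * M - N * N) * expCosh M r) := by
  have hderiv : ∀ r, HasDerivAt
      (fun r => integralCosh N (s - r) * (M * expSinh M r) + expCosh N (s - r) * expCosh M r)
      (integralCosh N (s - r) * ((M * M - N * N) * expCosh M r)) r := by
    intro r
    have hS := (hasDerivAt_integralCosh N (s - r)).comp_const_sub s r
    have hC := (hasDerivAt_expCosh N (s - r)).comp_const_sub s r
    refine ((hS.mul ((hasDerivAt_expSinh M r).const_mul M)).add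
      (hC.mul (hasDerivAt_expCosh M r))).congr_deriv ?_
    rw [mul_expSinh N (s - r)]
    noncomm_ring
  have hcont : Continuous fun r => integralCosh N (s - r) * ((M * M - N * N) * expCosh M r) :=
    ((continuous_integralCosh N).comp (continuous_const.sub continuous_id)).mul
      (continuous_const.mul (continuous_expCosh M))
  rw [intervalIntegral.integral_eq_sub_of_hasDerivAt (fun r _ => hderiv r)
    (hcont.intervalIntegrable 0 s)]
  simp

theorem norm_expCosh_sub_expCosh_le {M N : 𝔸} (hM : ∀ t : ℝ, ‖exp (t • M)‖ ≤ 1)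
    (hN : ∀ t : ℝ, ‖exp (t • N)‖ ≤ 1) (s : ℝ) :
    ‖expCosh M s - expCosh N s‖ ≤ s ^ 2 / 2 * ‖M * M - N * N‖ := by
  wlog hs : 0 ≤ s generalizing s
  · simpa [expCosh_neg] using this (-s) (by linarith)
  set K := ‖M * M - N * N‖
  have hbound : ∀ r ∈ Set.Ioc 0 s,
      ‖integralCosh N (s - r) * ((M * M - N * N) * expCosh M r)‖ ≤ (s - r) * K := by
    intro r hr
    calc _ ≤ ‖integralCosh N (s - r)‖ * (K * ‖expCosh M r‖) :=
          (norm_mul_le _ _).trans (by gcongr; exact norm_mul_le _ _)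
      _ ≤ |s - r| * (K * 1) := by
          gcongr
          exacts [norm_integralCosh_le hN _, norm_expCosh_le_one hM r]
      _ = (s - r) * K := by rw [abs_of_nonneg (by linarith [hr.2]), mul_one]
  calc ‖expCosh M s - expCosh N s‖ ≤ ∫ r in (0 : ℝ)..s, (s - r) * K := by
        rw [expCosh_sub_expCosh]
        exact intervalIntegral.norm_integral_le_of_norm_le hs (ae_of_all _ hbound)
          ((by fun_prop : Continuous fun r : ℝ => (s - r) * K).intervalIntegrable _ _)
    _ = s ^ 2 / 2 * K := by
        rw [intervalIntegral.integral_mul_const,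
          intervalIntegral.integral_comp_sub_left (fun x => x), integral_id]
        ring

end CoshFamily

open CoshFamily

theorem IsSelfAdjoint.norm_exp_smul_I_smul_le_one {𝔸 : Type*} [CStarAlgebra 𝔸] {a : 𝔸}
    (ha : IsSelfAdjoint a) (t : ℝ) : ‖NormedSpace.exp (t • (Complex.I • a))‖ ≤ 1 := by
  let +nondep : NormedAlgebra ℚ 𝔸 := .restrictScalars ℚ ℂ 𝔸
  have hskew : t • (Complex.I • a) ∈ skewAdjoint 𝔸 := by
    rw [skewAdjoint.mem_iff, ← Complex.coe_smul, smul_smul, star_smul, ha.star_eq, ← neg_smul]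
    simp
  rcases subsingleton_or_nontrivial 𝔸 with _ | _
  · simp [Subsingleton.elim (NormedSpace.exp (t • (Complex.I • a))) 0]
  · exact (CStarRing.norm_of_mem_unitary (exp_mem_unitary_of_mem_skewAdjoint hskew)).le

theorem integral_sq_mul_comp_div (g : ℝ → ℝ) {ε : ℝ} (hε : 0 < ε) :
    ∫ s, s ^ 2 * (ε⁻¹ * g (s / ε)) = ε ^ 2 * ∫ σ, σ ^ 2 * g σ := by
  have hscale :
      (fun s => s ^ 2 * (ε⁻¹ * g (s / ε))) = fun s => ε * ((s / ε) ^ 2 * g (s / ε)) := by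
    ext s
    field_simp
  rw [hscale, integral_const_mul, Measure.integral_comp_div (fun σ => σ ^ 2 * g σ),
    abs_of_pos hε, smul_eq_mul]
  ring

section

variable {H : Type*} [NormedAddCommGroup H] [InnerProductSpace ℂ H] [CompleteSpace H]

theorem opCos_eq_expCosh (A : H →L[ℂ] H) (s : ℝ) : opCos A s = expCosh (Complex.I • A) s := by
  have hsmul : ∀ z : ℝ, ((z : ℂ) * Complex.I) • A = z • (Complex.I • A) := fun z => by
    rw [← Complex.coe_smul, smul_smul]
  rw [opCos, expCosh, hsmul, ← Complex.ofReal_neg, hsmul, neg_smul, ← smul_neg,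
    show (2 : ℂ)⁻¹ = ((2⁻¹ : ℝ) : ℂ) by norm_num, Complex.coe_smul]

theorem continuous_opCos (A : H →L[ℂ] H) : Continuous (opCos A) := by
  simpa only [← funext (opCos_eq_expCosh A)] using continuous_expCosh (Complex.I • A)

theorem norm_opCos_le_one {A : H →L[ℂ] H} (hA : IsSelfAdjoint A) (s : ℝ) : ‖opCos A s‖ ≤ 1 := by
  rw [opCos_eq_expCosh]
  exact norm_expCosh_le_one hA.norm_exp_smul_I_smul_le_one s

theorem norm_opCos_sub_opCos_le {A B : H →L[ℂ] H} (hA : IsSelfAdjoint A) (hB : IsSelfAdjoint B)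
    (s : ℝ) : ‖opCos A s - opCos B s‖ ≤ s ^ 2 / 2 * ‖A ^ 2 - B ^ 2‖ := by
  have hsq : ∀ C : H →L[ℂ] H, (Complex.I • C) * (Complex.I • C) = -C ^ 2 := fun C => by
    rw [smul_mul_smul_comm, Complex.I_mul_I, neg_one_smul, sq]
  have h := norm_expCosh_sub_expCosh_le hA.norm_exp_smul_I_smul_le_one
    hB.norm_exp_smul_I_smul_le_one s
  rwa [hsq, hsq, neg_sub_neg, norm_sub_rev (B ^ 2), ← opCos_eq_expCosh, ← opCos_eq_expCosh] at h

theorem integrable_smul_opCos {A : H →L[ℂ] H} (hA : IsSelfAdjoint A) {φ ψ : ℝ → ℂ}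
    (hφ : AEStronglyMeasurable φ) {C : ℝ} (hφC : ∀ s, ‖φ s‖ ≤ C) (hψ : Integrable ψ)
    {ε : ℝ} (hε : ε ≠ 0) :
    Integrable fun s => (φ s * (ε : ℂ)⁻¹ * ψ (s / ε)) • opCos A s := by
  have hweight : Integrable fun s => φ s * (ε : ℂ)⁻¹ * ψ (s / ε) := by
    simpa only [mul_assoc] using
      ((hψ.comp_div hε).const_mul (ε : ℂ)⁻¹).bdd_mul hφ (ae_of_all _ hφC)
  exact hweight.smul_bdd 1 (continuous_opCos A).aestronglyMeasurable
    (ae_of_all _ (norm_opCos_le_one hA))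

theorem norm_regOp_sub_regOp_le {A B : H →L[ℂ] H} (hA : IsSelfAdjoint A) (hB : IsSelfAdjoint B)
    {φ ψ : ℝ → ℂ} (hφ : AEStronglyMeasurable φ) {C : ℝ} (hφC : ∀ s, ‖φ s‖ ≤ C)
    (hψ : Integrable ψ) (hψ₂ : Integrable fun σ => σ ^ 2 * ‖ψ σ‖) {ε : ℝ} (hε : 0 < ε) :
    ‖regOp A φ ψ ε - regOp B φ ψ ε‖ ≤
      1 / 2 * ‖A ^ 2 - B ^ 2‖ * C * (∫ σ, σ ^ 2 * ‖ψ σ‖) * ε ^ 2 := by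
  set K := ‖A ^ 2 - B ^ 2‖
  have hdiff : regOp A φ ψ ε - regOp B φ ψ ε =
      ∫ s, (φ s * (ε : ℂ)⁻¹ * ψ (s / ε)) • (opCos A s - opCos B s) := by
    simp_rw [regOp, smul_sub]
    exact (integral_sub (integrable_smul_opCos hA hφ hφC hψ hε.ne')
      (integrable_smul_opCos hB hφ hφC hψ hε.ne')).symm
  have hbound : ∀ s, ‖(φ s * (ε : ℂ)⁻¹ * ψ (s / ε)) • (opCos A s - opCos B s)‖ ≤
      C * K / 2 * (s ^ 2 * (ε⁻¹ * ‖ψ (s / ε)‖)) := fun s => by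
    have hC : 0 ≤ C := (norm_nonneg _).trans (hφC s)
    rw [norm_smul, norm_mul, norm_mul, norm_inv, Complex.norm_real, Real.norm_of_nonneg hε.le]
    calc _ ≤ C * ε⁻¹ * ‖ψ (s / ε)‖ * (s ^ 2 / 2 * K) := by
          gcongr
          exacts [hφC s, norm_opCos_sub_opCos_le hA hB s]
      _ = _ := by ring
  have hbound_int : Integrable fun s => C * K / 2 * (s ^ 2 * (ε⁻¹ * ‖ψ (s / ε)‖)) := by
    refine (((hψ₂.comp_div hε.ne').const_mul ε).const_mul (C * K / 2)).congr
      (ae_of_all _ fun s => ?_)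
    field_simp
  calc ‖regOp A φ ψ ε - regOp B φ ψ ε‖
      ≤ ∫ s, C * K / 2 * (s ^ 2 * (ε⁻¹ * ‖ψ (s / ε)‖)) :=
        hdiff ▸ norm_integral_le_of_norm_le hbound_int (ae_of_all _ hbound)
    _ = _ := by
        rw [integral_const_mul, integral_sq_mul_comp_div (fun σ => ‖ψ σ‖) hε]
        ring

end

theorem stmt9_general {H : Type*} [NormedAddCommGroup H] [InnerProductSpace ℂ H] [CompleteSpace H]
    (A B : H →L[ℂ] H) (hA : IsSelfAdjoint A) (hB : IsSelfAdjoint B)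
    (ψ : SchwartzMap ℝ ℂ) (φ : ℝ → ℂ)
    (hφcont : Continuous φ) (hφbdd : BddAbove (Set.range fun s : ℝ => ‖φ s‖)) :
    ∀ ε ∈ Set.Ioc (0 : ℝ) 1,
      ‖regOp A φ (⇑ψ) ε - regOp B φ (⇑ψ) ε‖ ≤
        (1 / 2) * ‖A ^ 2 - B ^ 2‖ * (⨆ s : ℝ, ‖φ s‖) *
          (∫ σ : ℝ, σ ^ 2 * ‖ψ σ‖) * ε ^ 2 := by
  intro ε hε
  have hψ₂ : Integrable fun σ : ℝ => σ ^ 2 * ‖ψ σ‖ :=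
    (ψ.integrable_pow_mul volume 2).congr (ae_of_all _ fun σ => by simp [sq_abs])
  exact norm_regOp_sub_regOp_le hA hB hφcont.aestronglyMeasurable (le_ciSup hφbdd)
    ψ.integrable hψ₂ hε.1

/-- With `T_ε^A`, `T_ε^B` built from the cosine families of bounded self-adjoint
operators `A`, `B`, a Schwartz profile `ψ` and a bounded continuous cutoff `φ` supported in
`[-2c, 2c]`, one has
`‖T_ε^A - T_ε^B‖ ≤ (1/2) ‖A² - B²‖ (sup |φ|) (∫ σ² |ψ(σ)| dσ) ε²` for `ε ∈ (0,1]`. -/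
theorem stmt9 {H : Type*} [NormedAddCommGroup H] [InnerProductSpace ℂ H] [CompleteSpace H]
    (A B : H →L[ℂ] H) (hA : IsSelfAdjoint A) (hB : IsSelfAdjoint B)
    (ψ : SchwartzMap ℝ ℂ) (c : ℝ) (hc : 0 < c) (φ : ℝ → ℂ)
    (hφcont : Continuous φ) (hφbdd : BddAbove (Set.range fun s : ℝ => ‖φ s‖))
    (hφsupp : Function.support φ ⊆ Set.Icc (-(2 * c)) (2 * c)) :
    ∀ ε ∈ Set.Ioc (0 : ℝ) 1,
      ‖regOp A φ (⇑ψ) ε - regOp B φ (⇑ψ) ε‖ ≤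
        (1 / 2) * ‖A ^ 2 - B ^ 2‖ * (⨆ s : ℝ, ‖φ s‖) *
          (∫ σ : ℝ, σ ^ 2 * ‖ψ σ‖) * ε ^ 2 :=
  stmt9_general A B hA hB ψ φ hφcont hφbdd
end

section
/- For a continuously differentiable path γ = (γ₁, γ₂) : [0,1] → ℝ² define L_ρ(γ) := ∫₀¹ √( γ₁'(t)² + γ₂'(t)²/(1 + γ₁(t)⁶ γ₂(t)⁶) ) dt, and for p, q ∈ ℝ² define d_ρ(p,q) := inf { L_ρ(γ) : γ : [0,1] → ℝ² continuously differentiable, γ(0) = p, γ(1) = q }. Then the sequence p_n := (1, n) (n ∈ ℕ) is d_ρ-Cauchy, i.e., for every δ > 0 there is N such that d_ρ(p_m, p_n) < δ for all m, n ≥ N, but there is no point p ∈ ℝ² with d_ρ(p_n, p) → 0 as n → ∞. -/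
open MeasureTheory Filter Topology

/-! The line `{t = 1}` has finite `ρ`-length `∫ dx / √(1 + x⁶)`, so the vertical segment from
`(1, m)` to `(1, n)` has length at most `1 / (2m²)` and `(1, n)` is Cauchy. A limit is ruled out by
the potential `f(t, x) = χ(t) σ(x) / 4` with `χ(t) = (1 + (t - 1)²)⁻²` and `σ(x) = x / √(1 + x²)`:
`σ'(x) = (1 + x²)^(-3/2)` and the decay `χ(t) = O(t⁻⁴)` absorb the weight `1 + t⁶x⁶` that `ρ` puts on
`∂ₓ f`, so the `ρ`-gradient of `f` has norm at most `1` and `f` is `1`-Lipschitz for `d_ρ`.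
Since `f(1, n) → 1/4` while `f < 1/4` everywhere, `d_ρ((1, n), p) ≥ f(1, n) - f(p)` stays away from `0`. -/

/-- The `ρ`-length `∫₀¹ √(γ₁'(t)² + γ₂'(t)²/(1 + γ₁(t)⁶ γ₂(t)⁶)) dt` of a `C¹` path
`γ : [0,1] → ℝ²`, for the Riemannian metric `ρ = dt² + dx²/(1 + t⁶x⁶)`. -/
noncomputable def lengthRho (γ : ℝ → ℝ × ℝ) : ℝ :=
  ∫ t in (0 : ℝ)..1,
    Real.sqrt ((deriv γ t).1 ^ 2 +
      (deriv γ t).2 ^ 2 / (1 + (γ t).1 ^ 6 * (γ t).2 ^ 6))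

/-- The length distance on `ℝ²` induced by the Riemannian metric `ρ = dt² + dx²/(1 + t⁶x⁶)`. -/
noncomputable def distRho (p q : ℝ × ℝ) : ℝ :=
  sInf {L : ℝ | ∃ γ : ℝ → ℝ × ℝ, ContDiff ℝ 1 γ ∧ γ 0 = p ∧ γ 1 = q ∧ L = lengthRho γ}

noncomputable def rhoNorm (p v : ℝ × ℝ) : ℝ :=
  √(v.1 ^ 2 + v.2 ^ 2 / (1 + p.1 ^ 6 * p.2 ^ 6))

lemma lengthRho_eq_integral_rhoNorm (γ : ℝ → ℝ × ℝ) :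
    lengthRho γ = ∫ t in (0 : ℝ)..1, rhoNorm (γ t) (deriv γ t) := rfl

lemma rhoNorm_neg (p v : ℝ × ℝ) : rhoNorm p (-v) = rhoNorm p v := by
  simp [rhoNorm]

lemma continuous_rhoNorm : Continuous fun q : (ℝ × ℝ) × (ℝ × ℝ) => rhoNorm q.1 q.2 := by
  unfold rhoNorm
  fun_prop (disch := intro; positivity)

lemma ContDiff.continuous_rhoNorm_deriv {γ : ℝ → ℝ × ℝ} (hγ : ContDiff ℝ 1 γ) :
    Continuous fun t => rhoNorm (γ t) (deriv γ t) :=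
  continuous_rhoNorm.comp (hγ.continuous.prodMk (hγ.continuous_deriv le_rfl))

lemma lengthRho_nonneg (γ : ℝ → ℝ × ℝ) : 0 ≤ lengthRho γ :=
  intervalIntegral.integral_nonneg zero_le_one fun _ _ => Real.sqrt_nonneg _

lemma lengthRho_comp_one_sub {γ : ℝ → ℝ × ℝ} (hγ : Differentiable ℝ γ) :
    lengthRho (fun s => γ (1 - s)) = lengthRho γ := by
  have hderiv (s : ℝ) : deriv (fun s => γ (1 - s)) s = -deriv γ (1 - s) := by
    simpa [Function.comp_def] using
      ((hγ (1 - s)).hasDerivAt.scomp s ((hasDerivAt_id s).const_sub 1)).deriv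
  simp only [lengthRho_eq_integral_rhoNorm, hderiv, rhoNorm_neg]
  simpa using intervalIntegral.integral_comp_sub_left (fun t => rhoNorm (γ t) (deriv γ t)) 1
    (a := 0) (b := 1)

lemma distRho_le_lengthRho {γ : ℝ → ℝ × ℝ} (hγ : ContDiff ℝ 1 γ) :
    distRho (γ 0) (γ 1) ≤ lengthRho γ :=
  csInf_le ⟨0, by rintro _ ⟨γ, -, -, -, rfl⟩; exact lengthRho_nonneg γ⟩ ⟨γ, hγ, rfl, rfl, rfl⟩

lemma le_distRho {p q : ℝ × ℝ} {c : ℝ}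
    (h : ∀ γ : ℝ → ℝ × ℝ, ContDiff ℝ 1 γ → γ 0 = p → γ 1 = q → c ≤ lengthRho γ) :
    c ≤ distRho p q := by
  refine le_csInf ⟨_, fun s => p + s • (q - p), by fun_prop, by simp, by simp, rfl⟩ ?_
  rintro _ ⟨γ, hγ, h0, h1, rfl⟩
  exact h γ hγ h0 h1

lemma distRho_comm (p q : ℝ × ℝ) : distRho p q = distRho q p := by
  have key (p q : ℝ × ℝ) : distRho p q ≤ distRho q p := le_distRho fun γ hγ h0 h1 => by
    have hrev : ContDiff ℝ 1 fun s => γ (1 - s) := hγ.comp (by fun_prop)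
    simpa [h0, h1, lengthRho_comp_one_sub (hγ.differentiable one_ne_zero)]
      using distRho_le_lengthRho hrev
  exact le_antisymm (key p q) (key q p)

lemma lengthRho_vertical (t a b : ℝ) (hab : a ≤ b) :
    lengthRho (fun s => (t, a + (b - a) * s)) = ∫ x in a..b, (√(1 + t ^ 6 * x ^ 6))⁻¹ := by
  have hderiv (s : ℝ) : deriv (fun s => (t, a + (b - a) * s)) s = (0, b - a) :=
    ((hasDerivAt_const s t).prodMk (((hasDerivAt_id s).const_mul (b - a)).const_add a)).deriv.trans
      (by simp)
  have hnorm (s : ℝ) : rhoNorm (t, a + (b - a) * s) (0, b - a) =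
      (b - a) * (√(1 + t ^ 6 * (a + (b - a) * s) ^ 6))⁻¹ := by
    have hba : 0 ≤ b - a := sub_nonneg.2 hab
    rw [rhoNorm, Real.sqrt_eq_iff_mul_self_eq (by positivity) (by positivity)]
    field_simp
    rw [Real.sq_sqrt (by positivity)]
    ring
  simp only [lengthRho_eq_integral_rhoNorm, hderiv, hnorm]
  simpa using intervalIntegral.mul_integral_comp_add_mul
    (f := fun x => (√(1 + t ^ 6 * x ^ 6))⁻¹) (a := 0) (b := 1) (b - a) a

lemma distRho_one_le {a b : ℝ} (ha : 0 < a) (hab : a ≤ b) :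
    distRho (1, a) (1, b) ≤ 1 / (2 * a ^ 2) := by
  have hsegment : ContDiff ℝ 1 fun s : ℝ => ((1 : ℝ), a + (b - a) * s) := by fun_prop
  have hzero : (0 : ℝ) ∉ Set.uIcc a b := by
    rw [Set.uIcc_of_le hab]; exact fun h => ha.not_ge h.1
  calc distRho (1, a) (1, b) ≤ ∫ x in a..b, (√(1 + 1 ^ 6 * x ^ 6))⁻¹ := by
        simpa [lengthRho_vertical 1 a b hab] using distRho_le_lengthRho hsegment
    _ ≤ ∫ x in a..b, x ^ (-3 : ℤ) := by
        refine intervalIntegral.integral_mono_on hab ?_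
          (intervalIntegral.intervalIntegrable_zpow (Or.inr hzero)) fun x hx => ?_
        · exact (Continuous.intervalIntegrable (by fun_prop (disch := intro; positivity)) _ _)
        · have hx : 0 < x := ha.trans_le hx.1
          rw [zpow_neg, zpow_ofNat]
          gcongr
          calc x ^ 3 = √((x ^ 3) ^ 2) := (Real.sqrt_sq (by positivity)).symm
            _ ≤ √(1 + 1 ^ 6 * x ^ 6) := Real.sqrt_le_sqrt (by nlinarith)
    _ = 1 / (2 * a ^ 2) - 1 / (2 * b ^ 2) := by
        rw [integral_zpow (Or.inr ⟨by norm_num, hzero⟩)]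
        have hb : 0 < b := ha.trans_le hab
        norm_num
        field_simp
        ring
    _ ≤ 1 / (2 * a ^ 2) := sub_le_self _ (by positivity)

lemma abs_sub_le_lengthRho {f : ℝ × ℝ → ℝ} (hf : ContDiff ℝ 1 f)
    (hf' : ∀ p v, |fderiv ℝ f p v| ≤ rhoNorm p v) {γ : ℝ → ℝ × ℝ} (hγ : ContDiff ℝ 1 γ) :
    |f (γ 1) - f (γ 0)| ≤ lengthRho γ := by
  have hderiv (s : ℝ) : HasDerivAt (f ∘ γ) (fderiv ℝ f (γ s) (deriv γ s)) s :=
    (hf.differentiable one_ne_zero (γ s)).hasFDerivAt.comp_hasDerivAt s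
      (hγ.differentiable one_ne_zero s).hasDerivAt
  have hcont : Continuous fun s => fderiv ℝ f (γ s) (deriv γ s) :=
    ((hf.continuous_fderiv one_ne_zero).comp hγ.continuous).clm_apply (hγ.continuous_deriv le_rfl)
  rw [← Function.comp_apply (f := f), ← Function.comp_apply (f := f) (x := 0),
    ← intervalIntegral.integral_eq_sub_of_hasDerivAt (fun s _ => hderiv s)
      (hcont.intervalIntegrable 0 1)]
  calc |∫ s in (0 : ℝ)..1, fderiv ℝ f (γ s) (deriv γ s)|
      ≤ ∫ s in (0 : ℝ)..1, |fderiv ℝ f (γ s) (deriv γ s)| :=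
        intervalIntegral.abs_integral_le_integral_abs zero_le_one
    _ ≤ lengthRho γ :=
        intervalIntegral.integral_mono_on zero_le_one (hcont.abs.intervalIntegrable 0 1)
          ((ContDiff.continuous_rhoNorm_deriv hγ).intervalIntegrable 0 1) fun s _ => hf' _ _

lemma abs_sub_le_distRho {f : ℝ × ℝ → ℝ} (hf : ContDiff ℝ 1 f)
    (hf' : ∀ p v, |fderiv ℝ f p v| ≤ rhoNorm p v) (p q : ℝ × ℝ) :
    |f p - f q| ≤ distRho p q :=
  le_distRho fun γ hγ h0 h1 => by
    simpa only [h0, h1, abs_sub_comm] using abs_sub_le_lengthRho hf hf' hγ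

lemma abs_mul_add_mul_le_mul_rhoNorm (A B : ℝ) (p v : ℝ × ℝ) :
    |A * v.1 + B * v.2| ≤ √(A ^ 2 + (1 + p.1 ^ 6 * p.2 ^ 6) * B ^ 2) * rhoNorm p v := by
  set W := 1 + p.1 ^ 6 * p.2 ^ 6
  have hW : 0 < W := by positivity
  rw [rhoNorm, ← Real.sqrt_mul (by positivity)]
  apply Real.abs_le_sqrt
  have key : (A ^ 2 + W * B ^ 2) * (v.1 ^ 2 + v.2 ^ 2 / W) - (A * v.1 + B * v.2) ^ 2
      = W * (A * (v.2 / W) - B * v.1) ^ 2 := by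
    field_simp
    ring
  nlinarith [sq_nonneg (A * (v.2 / W) - B * v.1)]

noncomputable def bump (t : ℝ) : ℝ := ((1 + (t - 1) ^ 2) ^ 2)⁻¹

noncomputable def bumpDeriv (t : ℝ) : ℝ := -4 * (t - 1) * ((1 + (t - 1) ^ 2) ^ 3)⁻¹

noncomputable def algSigmoid (x : ℝ) : ℝ := x / √(1 + x ^ 2)

noncomputable def algSigmoidDeriv (x : ℝ) : ℝ := (√(1 + x ^ 2) ^ 3)⁻¹

lemma hasDerivAt_bump (t : ℝ) : HasDerivAt bump (bumpDeriv t) t := by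
  have h := ((((hasDerivAt_id' t).sub_const 1).fun_pow 2).const_add 1).fun_pow 2 |>.inv
    (by positivity)
  refine (h : HasDerivAt bump _ t).congr_deriv ?_
  rw [bumpDeriv]
  field_simp
  ring

lemma hasDerivAt_algSigmoid (x : ℝ) : HasDerivAt algSigmoid (algSigmoidDeriv x) x := by
  have hpos : 0 < √(1 + x ^ 2) := by positivity
  have h := (hasDerivAt_id' x).div
    (((hasDerivAt_id' x).fun_pow 2).const_add 1 |>.sqrt (by positivity)) hpos.ne'
  refine (h : HasDerivAt algSigmoid _ x).congr_deriv ?_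
  rw [algSigmoidDeriv]
  field_simp
  rw [Real.sq_sqrt (by positivity)]
  ring

lemma contDiff_bump : ContDiff ℝ 1 bump := by
  unfold bump
  fun_prop (disch := intro; positivity)

lemma contDiff_algSigmoid : ContDiff ℝ 1 algSigmoid := by
  unfold algSigmoid
  fun_prop (disch := intro; positivity)

lemma bump_pos (t : ℝ) : 0 < bump t := by unfold bump; positivity

lemma bump_le_one (t : ℝ) : bump t ≤ 1 :=
  inv_le_one_of_one_le₀ (one_le_pow₀ (le_add_of_nonneg_right (sq_nonneg _)))

lemma bump_one : bump 1 = 1 := by norm_num [bump]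

lemma bumpDeriv_sq_le (t : ℝ) : bumpDeriv t ^ 2 ≤ 4 := by
  rw [bumpDeriv, mul_pow, inv_pow, ← pow_mul, ← div_eq_mul_inv, div_le_iff₀ (by positivity)]
  set A := 1 + (t - 1) ^ 2
  have hA : 1 ≤ A := le_add_of_nonneg_right (sq_nonneg _)
  calc (-4 * (t - 1)) ^ 2 = 16 * (t - 1) ^ 2 := by ring
    _ ≤ 4 * A ^ 2 := by nlinarith [sq_nonneg ((t - 1) ^ 2 - 1)]
    _ ≤ 4 * A ^ (3 * 2) := by gcongr; norm_num

lemma bump_sq_mul_pow_six_le (t : ℝ) : bump t ^ 2 * t ^ 6 ≤ 8 := by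
  rw [bump, inv_pow, ← pow_mul, ← div_eq_inv_mul, div_le_iff₀ (by positivity)]
  set A := 1 + (t - 1) ^ 2
  have hA : 1 ≤ A := le_add_of_nonneg_right (sq_nonneg _)
  calc t ^ 6 = (t ^ 2) ^ 3 := by ring
    _ ≤ (2 * A) ^ 3 := by gcongr; nlinarith [sq_nonneg (t - 2)]
    _ = 8 * A ^ 3 := by ring
    _ ≤ 8 * A ^ (2 * 2) := by gcongr; norm_num

lemma abs_algSigmoid_lt_one (x : ℝ) : |algSigmoid x| < 1 := by
  rw [algSigmoid, abs_div, abs_of_pos (by positivity : 0 < √(1 + x ^ 2)),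
    div_lt_one (by positivity), ← Real.sqrt_sq_eq_abs]
  exact Real.sqrt_lt_sqrt (sq_nonneg x) (lt_one_add _)

lemma algSigmoidDeriv_sq_mul (x : ℝ) : algSigmoidDeriv x ^ 2 * (1 + x ^ 2) ^ 3 = 1 := by
  rw [algSigmoidDeriv, inv_pow, ← pow_mul, mul_comm 3, pow_mul, Real.sq_sqrt (by positivity)]
  exact inv_mul_cancel₀ (by positivity)

noncomputable def rhoPotential (p : ℝ × ℝ) : ℝ := bump p.1 * algSigmoid p.2 / 4

lemma contDiff_rhoPotential : ContDiff ℝ 1 rhoPotential :=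
  ((contDiff_bump.comp contDiff_fst).mul (contDiff_algSigmoid.comp contDiff_snd)).div_const 4

lemma fderiv_rhoPotential_apply (p v : ℝ × ℝ) :
    fderiv ℝ rhoPotential p v =
      bumpDeriv p.1 * algSigmoid p.2 / 4 * v.1 + bump p.1 * algSigmoidDeriv p.2 / 4 * v.2 := by
  have h : HasFDerivAt rhoPotential _ p :=
    (((hasDerivAt_bump p.1).hasFDerivAt.comp p hasFDerivAt_fst).mul
      ((hasDerivAt_algSigmoid p.2).hasFDerivAt.comp p hasFDerivAt_snd)).mul_const (4⁻¹ : ℝ)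
  rw [h.fderiv]
  simp only [Function.comp_apply, smul_add, add_apply, smul_apply, ContinuousLinearMap.comp_apply,
    ContinuousLinearMap.coe_snd', ContinuousLinearMap.toSpanSingleton_apply, smul_eq_mul,
    ContinuousLinearMap.coe_fst']
  ring

lemma rhoPotential_gradient_sq_le (p : ℝ × ℝ) :
    (bumpDeriv p.1 * algSigmoid p.2 / 4) ^ 2 +
      (1 + p.1 ^ 6 * p.2 ^ 6) * (bump p.1 * algSigmoidDeriv p.2 / 4) ^ 2 ≤ 1 := by
  obtain ⟨t, x⟩ := p
  have h_dt : (bumpDeriv t * algSigmoid x) ^ 2 ≤ 4 := by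
    have hσ : algSigmoid x ^ 2 ≤ 1 := by
      nlinarith [abs_algSigmoid_lt_one x, abs_nonneg (algSigmoid x), sq_abs (algSigmoid x)]
    rw [mul_pow]
    nlinarith [bumpDeriv_sq_le t, sq_nonneg (bumpDeriv t), sq_nonneg (algSigmoid x)]
  have h_dx : (1 + t ^ 6 * x ^ 6) * (bump t * algSigmoidDeriv x) ^ 2 ≤ 9 := by
    have hχ : bump t ^ 2 ≤ 1 := pow_le_one₀ (bump_pos t).le (bump_le_one t)
    have hA : 1 ≤ (1 + x ^ 2) ^ 3 := one_le_pow₀ (le_add_of_nonneg_right (sq_nonneg x))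
    have hx6 : x ^ 6 ≤ (1 + x ^ 2) ^ 3 := by nlinarith [sq_nonneg x, sq_nonneg (x ^ 2)]
    have hσ' := algSigmoidDeriv_sq_mul x
    have hd1 : algSigmoidDeriv x ^ 2 ≤ 1 := by nlinarith [sq_nonneg (algSigmoidDeriv x)]
    have hd2 : x ^ 6 * algSigmoidDeriv x ^ 2 ≤ 1 := by nlinarith [sq_nonneg (algSigmoidDeriv x)]
    have h3 := mul_le_mul hχ hd1 (sq_nonneg _) zero_le_one
    have h4 := mul_le_mul (bump_sq_mul_pow_six_le t) hd2 (by positivity) (by norm_num)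
    linear_combination h3 + h4
  nlinarith

lemma abs_fderiv_rhoPotential_le (p v : ℝ × ℝ) :
    |fderiv ℝ rhoPotential p v| ≤ rhoNorm p v := by
  rw [fderiv_rhoPotential_apply]
  exact (abs_mul_add_mul_le_mul_rhoNorm _ _ p v).trans <|
    mul_le_of_le_one_left (Real.sqrt_nonneg _) <|
      Real.sqrt_le_one.mpr (rhoPotential_gradient_sq_le p)

lemma rhoPotential_lt (p : ℝ × ℝ) : rhoPotential p < 1 / 4 := by
  have : bump p.1 * algSigmoid p.2 < 1 := (le_abs_self _).trans_lt <| by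
    rw [abs_mul, abs_of_pos (bump_pos _)]
    exact mul_lt_one_of_nonneg_of_lt_one_right (bump_le_one _) (abs_nonneg _)
      (abs_algSigmoid_lt_one _)
  rw [rhoPotential]
  linarith

lemma tendsto_algSigmoid_atTop : Tendsto algSigmoid atTop (𝓝 1) := by
  have h : Tendsto (fun x : ℝ => (√(1 + (x⁻¹) ^ 2))⁻¹) atTop (𝓝 (√(1 + 0 ^ 2))⁻¹) :=
    (((tendsto_inv_atTop_zero.pow 2).const_add 1).sqrt).inv₀ (by positivity)
  rw [zero_pow two_ne_zero, add_zero, Real.sqrt_one, inv_one] at h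
  refine h.congr' ((eventually_gt_atTop 0).mono fun x hx => ?_)
  have hsqrt : √(1 + x ^ 2) = x * √(1 + x⁻¹ ^ 2) := by
    rw [Real.sqrt_eq_iff_mul_self_eq (by positivity) (by positivity), mul_mul_mul_comm,
      Real.mul_self_sqrt (by positivity)]
    field_simp
    ring
  rw [algSigmoid, hsqrt, div_mul_eq_div_div, div_self hx.ne', one_div]

lemma tendsto_rhoPotential_one_natCast :
    Tendsto (fun n : ℕ => rhoPotential (1, n)) atTop (𝓝 (1 / 4)) := by
  have h := (tendsto_algSigmoid_atTop.comp tendsto_natCast_atTop_atTop).const_mul (bump 1)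
    |>.div_const 4
  simpa [rhoPotential, bump_one] using h

/-- The sequence `pₙ = (1, n)` is Cauchy for the length distance of the
Riemannian metric `ρ = dt² + dx²/(1 + t⁶x⁶)` on `ℝ²`, but has no limit in `ℝ²`: the metric `ρ`
is not complete. -/
theorem stmt13 :
    (∀ δ : ℝ, 0 < δ → ∃ N : ℕ, ∀ m : ℕ, N ≤ m → ∀ n : ℕ, N ≤ n →
      distRho (1, (m : ℝ)) (1, (n : ℝ)) < δ) ∧
    ¬ ∃ p : ℝ × ℝ, Tendsto (fun n : ℕ => distRho (1, (n : ℝ)) p) atTop (𝓝 0) := by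
  refine ⟨fun δ hδ => ?_, fun ⟨p, hp⟩ => ?_⟩
  · obtain ⟨N, hN⟩ := exists_nat_one_div_lt hδ
    refine ⟨N + 1, fun m hm n hn => ?_⟩
    wlog hmn : m ≤ n generalizing m n
    · rw [distRho_comm]
      exact this n hn m hm (le_of_not_ge hmn)
    have hm' : (N : ℝ) + 1 ≤ m := by exact_mod_cast hm
    calc distRho (1, (m : ℝ)) (1, (n : ℝ)) ≤ 1 / (2 * (m : ℝ) ^ 2) :=
          distRho_one_le (by linarith) (by exact_mod_cast hmn)
      _ ≤ 1 / ((N : ℝ) + 1) := by gcongr; nlinarith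
      _ < δ := hN
  · have hlower (n : ℕ) : rhoPotential (1, n) - rhoPotential p ≤ distRho (1, (n : ℝ)) p :=
      (le_abs_self _).trans <|
        abs_sub_le_distRho contDiff_rhoPotential abs_fderiv_rhoPotential_le _ _
    have hgap := le_of_tendsto_of_tendsto' (tendsto_rhoPotential_one_natCast.sub_const _) hp hlower
    linarith [rhoPotential_lt p]
end

section
/- For a continuously differentiable path γ = (γ₁, γ₂) : [0,1] → ℝ² define L_{αρ}(γ) := ∫₀¹ √( (1 + γ₁(t)⁶ γ₂(t)⁶) γ₁'(t)² + γ₂'(t)² ) dt, and for p, q ∈ ℝ² define d_{αρ}(p,q) := inf { L_{αρ}(γ) : γ : [0,1] → ℝ² continuously differentiable, γ(0) = p, γ(1) = q }. Then every d_{αρ}-Cauchy sequence (p_n) in ℝ² converges, i.e., there exists p ∈ ℝ² with d_{αρ}(p_n, p) → 0 as n → ∞. -/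
/-!
Since `1 + t⁶x⁶ ≥ 1`, the `αρ`-length of a path dominates the length of its chord, so `d_{αρ}`
dominates the (sup-norm) distance of `ℝ²` and a `d_{αρ}`-Cauchy sequence converges in `ℝ²` to some
`q`. Conversely, along the straight segment from `p` to `q` the factor `1 + t⁶x⁶` is bounded in
terms of `max ‖p‖ ‖q‖`, so `d_{αρ}(p, q) ≤ C ‖q - p‖` locally uniformly, and `d_{αρ}(p_n, q) → 0`.
-/

open MeasureTheory Filter Topology

/-- The `αρ`-length `∫₀¹ √((1 + γ₁(t)⁶ γ₂(t)⁶) γ₁'(t)² + γ₂'(t)²) dt` of a `C¹` path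
`γ : [0,1] → ℝ²`, for the conformally rescaled Riemannian metric `αρ = (1 + t⁶x⁶) dt² + dx²`. -/
noncomputable def lengthAlphaRho (γ : ℝ → ℝ × ℝ) : ℝ :=
  ∫ t in (0 : ℝ)..1,
    Real.sqrt ((1 + (γ t).1 ^ 6 * (γ t).2 ^ 6) * (deriv γ t).1 ^ 2 + (deriv γ t).2 ^ 2)

/-- The length distance on `ℝ²` induced by the Riemannian metric `αρ = (1 + t⁶x⁶) dt² + dx²`. -/
noncomputable def distAlphaRho (p q : ℝ × ℝ) : ℝ :=
  sInf {L : ℝ | ∃ γ : ℝ → ℝ × ℝ, ContDiff ℝ 1 γ ∧ γ 0 = p ∧ γ 1 = q ∧ L = lengthAlphaRho γ}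

-- `lengthAlphaRho γ` is definitionally `∫ t in 0..1, tangentNormAlphaRho (γ t) (deriv γ t)`.
noncomputable def tangentNormAlphaRho (x v : ℝ × ℝ) : ℝ :=
  √((1 + x.1 ^ 6 * x.2 ^ 6) * v.1 ^ 2 + v.2 ^ 2)

lemma sq_fst_le_sq_norm (v : ℝ × ℝ) : v.1 ^ 2 ≤ ‖v‖ ^ 2 :=
  sq_le_sq.mpr (by simpa using norm_fst_le v)

lemma sq_snd_le_sq_norm (v : ℝ × ℝ) : v.2 ^ 2 ≤ ‖v‖ ^ 2 :=
  sq_le_sq.mpr (by simpa using norm_snd_le v)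

lemma norm_le_tangentNormAlphaRho (x v : ℝ × ℝ) : ‖v‖ ≤ tangentNormAlphaRho x v := by
  have hx : 0 ≤ x.1 ^ 6 * x.2 ^ 6 := by positivity
  rw [Prod.norm_def, Real.norm_eq_abs, Real.norm_eq_abs]
  refine max_le (Real.abs_le_sqrt ?_) (Real.abs_le_sqrt ?_) <;>
    nlinarith [sq_nonneg v.1, sq_nonneg v.2, mul_nonneg hx (sq_nonneg v.1)]

lemma tangentNormAlphaRho_le (x v : ℝ × ℝ) :
    tangentNormAlphaRho x v ≤ √(2 + ‖x‖ ^ 12) * ‖v‖ := by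
  have hx : x.1 ^ 6 * x.2 ^ 6 ≤ ‖x‖ ^ 12 := by
    have h₁ := pow_le_pow_left₀ (sq_nonneg _) (sq_fst_le_sq_norm x) 3
    have h₂ := pow_le_pow_left₀ (sq_nonneg _) (sq_snd_le_sq_norm x) 3
    calc x.1 ^ 6 * x.2 ^ 6 = (x.1 ^ 2) ^ 3 * (x.2 ^ 2) ^ 3 := by ring
      _ ≤ (‖x‖ ^ 2) ^ 3 * (‖x‖ ^ 2) ^ 3 := by gcongr
      _ = ‖x‖ ^ 12 := by ring
  rw [← Real.sqrt_sq (norm_nonneg v), ← Real.sqrt_mul (by positivity)]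
  refine Real.sqrt_le_sqrt ?_
  have h₁ := sq_fst_le_sq_norm v
  have h₂ := sq_snd_le_sq_norm v
  nlinarith [mul_le_mul_of_nonneg_left h₁ (by positivity : (0 : ℝ) ≤ 1 + x.1 ^ 6 * x.2 ^ 6),
    mul_le_mul_of_nonneg_right hx (sq_nonneg ‖v‖)]

lemma intervalIntegrable_tangentNormAlphaRho {γ : ℝ → ℝ × ℝ} (hγ : ContDiff ℝ 1 γ) (a b : ℝ) :
    IntervalIntegrable (fun t => tangentNormAlphaRho (γ t) (deriv γ t)) volume a b := by
  have := hγ.continuous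
  have := hγ.continuous_deriv le_rfl
  unfold tangentNormAlphaRho
  exact Continuous.intervalIntegrable (by fun_prop) a b

lemma norm_sub_le_lengthAlphaRho {γ : ℝ → ℝ × ℝ} (hγ : ContDiff ℝ 1 γ) :
    ‖γ 1 - γ 0‖ ≤ lengthAlphaRho γ := by
  have hγ' : Continuous (deriv γ) := hγ.continuous_deriv le_rfl
  rw [← intervalIntegral.integral_deriv_eq_sub (fun t _ => hγ.differentiable one_ne_zero t)
    (hγ'.intervalIntegrable 0 1)]
  calc ‖∫ t in (0 : ℝ)..1, deriv γ t‖ ≤ ∫ t in (0 : ℝ)..1, ‖deriv γ t‖ :=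
        intervalIntegral.norm_integral_le_integral_norm zero_le_one
    _ ≤ lengthAlphaRho γ :=
        intervalIntegral.integral_mono_on zero_le_one (hγ'.norm.intervalIntegrable 0 1)
          (intervalIntegrable_tangentNormAlphaRho hγ 0 1)
          fun t _ => norm_le_tangentNormAlphaRho _ _

lemma norm_lineMap_le {E : Type*} [NormedAddCommGroup E] [NormedSpace ℝ E] {p q : E} {t : ℝ}
    (ht : t ∈ Set.Icc (0 : ℝ) 1) :
    ‖AffineMap.lineMap p q t‖ ≤ max ‖p‖ ‖q‖ := by
  have := (convex_closedBall (0 : E) (max ‖p‖ ‖q‖)).segment_subset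
    (by simp) (by simp) (lineMap_mem_segment ℝ p q ht)
  simpa using this

lemma lengthAlphaRho_lineMap_le (p q : ℝ × ℝ) :
    lengthAlphaRho (AffineMap.lineMap p q) ≤ √(2 + max ‖p‖ ‖q‖ ^ 12) * ‖q - p‖ := by
  have hderiv (t : ℝ) : deriv (AffineMap.lineMap p q) t = q - p :=
    AffineMap.hasDerivAt_lineMap.deriv
  calc lengthAlphaRho (AffineMap.lineMap p q)
      ≤ ∫ _ in (0 : ℝ)..1, √(2 + max ‖p‖ ‖q‖ ^ 12) * ‖q - p‖ := by
        refine intervalIntegral.integral_mono_on zero_le_one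
          (intervalIntegrable_tangentNormAlphaRho (AffineMap.contDiff_lineMap p q) 0 1)
          intervalIntegrable_const fun t ht => ?_
        rw [hderiv]
        refine (tangentNormAlphaRho_le _ _).trans ?_
        gcongr
        exact norm_lineMap_le ht
    _ = √(2 + max ‖p‖ ‖q‖ ^ 12) * ‖q - p‖ := by simp

lemma lengthAlphaRho_lineMap_mem (p q : ℝ × ℝ) :
    lengthAlphaRho (AffineMap.lineMap p q) ∈
      {L : ℝ | ∃ γ : ℝ → ℝ × ℝ, ContDiff ℝ 1 γ ∧ γ 0 = p ∧ γ 1 = q ∧ L = lengthAlphaRho γ} :=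
  ⟨_, AffineMap.contDiff_lineMap p q, by simp, by simp, rfl⟩

lemma dist_le_distAlphaRho (p q : ℝ × ℝ) : dist p q ≤ distAlphaRho p q := by
  refine le_csInf ⟨_, lengthAlphaRho_lineMap_mem p q⟩ ?_
  rintro _ ⟨γ, hγ, rfl, rfl, rfl⟩
  rw [dist_comm, dist_eq_norm]
  exact norm_sub_le_lengthAlphaRho hγ

lemma distAlphaRho_le (p q : ℝ × ℝ) :
    distAlphaRho p q ≤ √(2 + max ‖p‖ ‖q‖ ^ 12) * ‖q - p‖ := by
  have hbdd : BddBelow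
      {L : ℝ | ∃ γ : ℝ → ℝ × ℝ, ContDiff ℝ 1 γ ∧ γ 0 = p ∧ γ 1 = q ∧ L = lengthAlphaRho γ} := by
    refine ⟨0, ?_⟩
    rintro _ ⟨γ, hγ, rfl, rfl, rfl⟩
    exact (norm_nonneg _).trans (norm_sub_le_lengthAlphaRho hγ)
  exact (csInf_le hbdd (lengthAlphaRho_lineMap_mem p q)).trans (lengthAlphaRho_lineMap_le p q)

lemma tendsto_distAlphaRho_of_tendsto {ι : Type*} {l : Filter ι} {p : ι → ℝ × ℝ} {q : ℝ × ℝ}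
    (hp : Tendsto p l (𝓝 q)) : Tendsto (fun i => distAlphaRho (p i) q) l (𝓝 0) := by
  have hbound : Tendsto (fun x => √(2 + max ‖x‖ ‖q‖ ^ 12) * ‖q - x‖) (𝓝 q) (𝓝 0) := by
    simpa using ((by fun_prop : Continuous fun x : ℝ × ℝ =>
      √(2 + max ‖x‖ ‖q‖ ^ 12) * ‖q - x‖).tendsto q)
  exact squeeze_zero (fun i => dist_nonneg.trans (dist_le_distAlphaRho _ _))
    (fun i => distAlphaRho_le _ _) (hbound.comp hp)

/-- The length distance induced by the conformally rescaled Riemannian metric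
`αρ = (1 + t⁶x⁶) dt² + dx²` on `ℝ²` is complete: every Cauchy sequence converges. -/
theorem stmt14 (p : ℕ → ℝ × ℝ)
    (hcauchy : ∀ δ : ℝ, 0 < δ → ∃ N : ℕ, ∀ m : ℕ, N ≤ m → ∀ n : ℕ, N ≤ n →
      distAlphaRho (p m) (p n) < δ) :
    ∃ q : ℝ × ℝ, Tendsto (fun n : ℕ => distAlphaRho (p n) q) atTop (𝓝 0) := by
  have hp : CauchySeq p := Metric.cauchySeq_iff.mpr fun ε hε =>
    (hcauchy ε hε).imp fun _ hN m hm n hn => (dist_le_distAlphaRho _ _).trans_lt (hN m hm n hn)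
  obtain ⟨q, hq⟩ := cauchySeq_tendsto_of_complete hp
  exact ⟨q, tendsto_distAlphaRho_of_tendsto hq⟩
end
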